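/- arXiv:1312.6064 — 3 statements merged into one kernel-verified Lean document; each statement's English description precedes it below -/
import Mathlib

section
/- Let p be a prime and let S be a subspace of F_{p^2}^n such that there exist x, y ∈ S with Hermitian inner product ⟨x,y⟩ = Σᵢ xᵢ yᵢ^p ≠ 0. Then for every k ∈ F_p there exists z ∈ S with Hermitian norm ‖z‖ = Σᵢ zᵢ^{p+1} = k. -/
/-- If a subspace `S` of `F_{p^2}^n` contains `x, y` with Hermitian
inner product `⟨x,y⟩ = ∑ i, x i * (y i)^p ≠ 0`, then for every `k` in the prime
subfield `F_p` (i.e. `k^p = k`) there is `z ∈ S` with Hermitian norm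
`‖z‖ = ∑ i, (z i)^(p+1) = k`. -/
theorem hermitian_norm_exists_in_subspace (p n : ℕ) (hp : p.Prime) (F : Type*) [Field F] [Fintype F]
    (hF : Fintype.card F = p ^ 2)
    (S : Submodule F (Fin n → F))
    (x y : Fin n → F) (hx : x ∈ S) (hy : y ∈ S)
    (hxy : ∑ i, x i * (y i) ^ p ≠ 0) :
    ∀ k : F, k ^ p = k → ∃ z ∈ S, ∑ i, (z i) ^ (p + 1) = k := by
  haveI : Fact p.Prime := ⟨hp⟩
  -- characteristic of F is p
  obtain ⟨q, hq⟩ := CharP.exists F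
  haveI := hq
  obtain ⟨m, hqprime, hcard⟩ := FiniteField.card F q
  have hqp : q = p := by
    have h1 : q ∣ p ^ 2 := by
      rw [← hF, hcard]
      exact dvd_pow_self q m.2.ne'
    exact (Nat.prime_dvd_prime_iff_eq hqprime hp).mp (hqprime.dvd_of_dvd_pow h1)
  haveI hcharp : CharP F p := by rwa [hqp] at hq
  have hpred : p - 1 + 1 = p := Nat.succ_pred_eq_of_pos hp.pos
  -- Frobenius squared is the identity
  have frob_frob : ∀ a : F, (a ^ p) ^ p = a := by
    intro a
    have h := FiniteField.pow_card a
    rw [hF] at h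
    rw [← pow_mul, ← pow_two]
    exact h
  -- (p+1)-th powers are fixed by Frobenius
  have pow_p1 : ∀ a : F, (a ^ (p + 1)) ^ p = a ^ (p + 1) := by
    intro a
    rw [← pow_mul, show (p + 1) * p = p * p + p by ring, pow_add, pow_mul, frob_frob a,
      pow_succ, mul_comm]
  -- there is an element with nonzero "trace"
  have hbex : ∃ b : F, b + b ^ p ≠ 0 := by
    by_contra h
    push_neg at h
    have hu : ∀ u : Fˣ, u ^ (2 * (p - 1)) = 1 := by
      intro u
      have h1 : ((u : F)) ^ p = -(u : F) := by
        have := h (u : F); linear_combination this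
      have h2 : ((u : F)) ^ (p - 1) = -1 := by
        have hu0 : (u : F) ≠ 0 := u.ne_zero
        apply mul_right_cancel₀ hu0
        rw [neg_one_mul, ← pow_succ, hpred]
        exact h1
      have h3 : ((u : F)) ^ (2 * (p - 1)) = 1 := by
        rw [mul_comm, pow_mul, h2, neg_one_sq]
      rw [← Units.val_eq_one, Units.val_pow_eq_pow_val]
      exact h3
    have hdvd := (FiniteField.forall_pow_eq_one_iff (K := F) (2 * (p - 1))).mp hu
    rw [hF] at hdvd
    have h2le := hp.two_le
    have hle : p ^ 2 - 1 ≤ 2 * (p - 1) := Nat.le_of_dvd (by omega) hdvd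
    have h4 : 4 ≤ p * p := Nat.mul_le_mul h2le h2le
    rw [pow_two] at hle
    have hlt : p * p < p * 2 := by omega
    have : p < 2 := Nat.lt_of_mul_lt_mul_left hlt
    omega
  -- norm surjectivity on the prime subfield
  have hnorm_surj : ∀ k : F, k ≠ 0 → k ^ p = k → ∃ a : F, a ^ (p + 1) = k := by
    intro k hk0 hk
    obtain ⟨g, hg⟩ := IsCyclic.exists_generator (α := Fˣ)
    have hordg : orderOf g = p ^ 2 - 1 := by
      rw [orderOf_eq_card_of_forall_mem_zpowers hg]
      rw [Nat.card_units, Nat.card_eq_fintype_card, hF]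
    set u : Fˣ := Units.mk0 k hk0 with hu
    obtain ⟨mz, hmz0⟩ := hg u
    have hmz : g ^ mz = u := hmz0
    have hk1 : u ^ (p - 1) = 1 := by
      rw [← Units.val_eq_one, Units.val_pow_eq_pow_val]
      have hval : (u : F) = k := rfl
      rw [hval]
      apply mul_right_cancel₀ hk0
      rw [one_mul, ← pow_succ, hpred]
      exact hk
    have h1 : g ^ (mz * ((p - 1 : ℕ) : ℤ)) = 1 := by
      rw [zpow_mul, hmz, zpow_natCast, hk1]
    have hdvd : ((p : ℤ) ^ 2 - 1) ∣ mz * ((p : ℤ) - 1) := by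
      have hd := orderOf_dvd_iff_zpow_eq_one.mpr h1
      rw [hordg] at hd
      have hc1 : ((p ^ 2 - 1 : ℕ) : ℤ) = (p : ℤ) ^ 2 - 1 := by
        have h12 : 1 ≤ p ^ 2 := Nat.one_le_pow _ _ hp.pos
        rw [Nat.cast_sub h12]
        push_cast
        ring
      have hc2 : ((p - 1 : ℕ) : ℤ) = (p : ℤ) - 1 := by
        rw [Nat.cast_sub hp.pos]
        push_cast
        ring
      rw [hc1, hc2] at hd
      exact hd
    have hfac : ((p : ℤ) + 1) * ((p : ℤ) - 1) ∣ mz * ((p : ℤ) - 1) := by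
      rwa [show ((p : ℤ) + 1) * ((p : ℤ) - 1) = (p : ℤ) ^ 2 - 1 by ring]
    have hpm1 : ((p : ℤ) - 1) ≠ 0 := by
      have h2p : (2 : ℤ) ≤ (p : ℤ) := by exact_mod_cast hp.two_le
      omega
    have hdvd2 : ((p : ℤ) + 1) ∣ mz := (mul_dvd_mul_iff_right hpm1).mp hfac
    obtain ⟨t, ht⟩ := hdvd2
    refine ⟨((g ^ t : Fˣ) : F), ?_⟩
    have hpow : (g ^ t) ^ (p + 1) = u := by
      rw [← zpow_natCast ((g : Fˣ) ^ t), ← zpow_mul, ← hmz, ht]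
      congr 1
      push_cast
      ring
    rw [← Units.val_pow_eq_pow_val, hpow]
    rfl
  intro k hk
  by_cases hk0 : k = 0
  · exact ⟨0, S.zero_mem, by simp [hk0, zero_pow (Nat.succ_ne_zero p)]⟩
  -- sums of (p+1)-th powers are fixed by Frobenius
  have hsumfix : ∀ w : Fin n → F, (∑ i, w i ^ (p + 1)) ^ p = ∑ i, w i ^ (p + 1) := by
    intro w
    rw [sum_pow_char]
    exact Finset.sum_congr rfl fun i _ => pow_p1 (w i)
  -- a vector with nonzero norm suffices
  have hcase : ∀ w : Fin n → F, w ∈ S → (∑ i, w i ^ (p + 1)) ≠ 0 →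
      ∃ z ∈ S, ∑ i, (z i) ^ (p + 1) = k := by
    intro w hw hNw
    set s := ∑ i, w i ^ (p + 1) with hs
    have hks : (k / s) ^ p = k / s := by rw [div_pow, hk, hs, hsumfix w]
    have hks0 : k / s ≠ 0 := div_ne_zero hk0 hNw
    obtain ⟨a, ha⟩ := hnorm_surj _ hks0 hks
    refine ⟨a • w, S.smul_mem a hw, ?_⟩
    simp only [Pi.smul_apply, smul_eq_mul, mul_pow]
    rw [← Finset.mul_sum, ← hs, ha, div_mul_cancel₀ k hNw]
  by_cases hNx : (∑ i, x i ^ (p + 1)) ≠ 0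
  · exact hcase x hx hNx
  by_cases hNy : (∑ i, y i ^ (p + 1)) ≠ 0
  · exact hcase y hy hNy
  push_neg at hNx hNy
  -- trace case
  set c := ∑ i, x i * y i ^ p with hc
  have hByx : ∑ i, y i * x i ^ p = c ^ p := by
    rw [hc, sum_pow_char]
    refine Finset.sum_congr rfl fun i _ => ?_
    rw [mul_pow, frob_frob (y i), mul_comm]
  obtain ⟨b, hb⟩ := hbex
  set c0 := b + b ^ p with hc0
  have hc0p : c0 ^ p = c0 := by
    rw [hc0, add_pow_char, frob_frob b, add_comm]
  set w := (k / c0) * b with hw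
  have hwtr : w + w ^ p = k := by
    have hkc : (k / c0) ^ p = k / c0 := by rw [div_pow, hk, hc0p]
    rw [hw, mul_pow, hkc, ← mul_add, ← hc0, div_mul_cancel₀ k hb]
  set a := w / c with ha
  have expand : ∑ i, (a * x i + y i) ^ (p + 1)
      = a ^ (p + 1) * (∑ i, x i ^ (p + 1)) + a * (∑ i, x i * y i ^ p)
        + a ^ p * (∑ i, y i * x i ^ p) + (∑ i, y i ^ (p + 1)) := by
    rw [Finset.mul_sum, Finset.mul_sum, Finset.mul_sum, ← Finset.sum_add_distrib,
      ← Finset.sum_add_distrib, ← Finset.sum_add_distrib]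
    refine Finset.sum_congr rfl fun i _ => ?_
    rw [pow_succ (a * x i + y i), add_pow_char, mul_pow, pow_succ a, pow_succ (x i),
      pow_succ (y i)]
    ring
  refine ⟨a • x + y, S.add_mem (S.smul_mem a hx) hy, ?_⟩
  have hz : ∀ i, (a • x + y) i = a * x i + y i := fun i => rfl
  simp only [hz]
  rw [expand, hNx, hNy, hByx, mul_zero, zero_add, add_zero, ← mul_pow, ha,
    div_mul_cancel₀ w hxy]
  exact hwtr
end

section
/- Let p be a prime and let x, y ∈ F_{p^2}^n with Hermitian inner product ⟨x,y⟩ ≠ 0. Then the function g(c) = ‖cx + y‖ (the Hermitian norm of cx+y), as c ranges over F_{p^2}, takes every value in F_p. -/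
/-!
`‖c x + y‖ = ‖x‖ c^{p+1} + ⟨y,x⟩ c^p + ⟨x,y⟩ c + ‖y‖` is a polynomial in `c` of degree at
most `p + 1`, and it is non-constant because its linear coefficient is `⟨x,y⟩ ≠ 0`; so each value
is taken at most `p + 1` times. Every value lies in `F_p`, since `(a^{p+1})^p = a^{p+1}` in
`F_{p^2}`. If some value of `F_p` were missed, the `p^2` points `c`
would map into at most `p - 1` values, giving `p^2 ≤ (p + 1)(p - 1)`, which is absurd.
-/

open Polynomial Finset

theorem Finset.exists_eq_of_card_fiber_le {α β : Type*} [DecidableEq β] {f : α → β}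
    {s : Finset α} {t : Finset β} (hf : ∀ a ∈ s, f a ∈ t) (m : ℕ)
    (hfib : ∀ b ∈ t, #{a ∈ s | f a = b} ≤ m) (hs : m * (#t - 1) < #s) {b : β} (hb : b ∈ t) :
    ∃ a ∈ s, f a = b := by
  by_contra! hmiss
  have hle := card_le_mul_card_image_of_maps_to (t := t.erase b)
    (fun a ha => mem_erase.2 ⟨hmiss a ha, hf a ha⟩) m
    (fun b' hb' => hfib b' (mem_of_mem_erase hb'))
  rw [card_erase_of_mem hb] at hle
  omega

theorem card_filter_pow_eq_self_le {K : Type*} [Field K] [Fintype K] [DecidableEq K] {p : ℕ}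
    (hp : 1 < p) : #{z : K | z ^ p = z} ≤ p := by
  calc #{z : K | z ^ p = z} ≤ (X ^ p - X : K[X]).natDegree := by
        refine card_le_degree_of_subset_roots fun z hz => ?_
        rw [mem_roots (FiniteField.X_pow_card_sub_X_ne_zero K hp)]
        simpa [sub_eq_zero] using (mem_filter.1 hz).2
    _ = p := FiniteField.X_pow_card_sub_X_natDegree_eq K hp

theorem Polynomial.card_filter_eval_eq_le {R : Type*} [CommRing R] [IsDomain R] [Fintype R]
    [DecidableEq R] (P : R[X]) (hP : 0 < P.natDegree) (v : R) :
    #{c | P.eval c = v} ≤ P.natDegree := by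
  have hne : P - C v ≠ 0 := ne_zero_of_natDegree_gt (n := 0) (by rwa [natDegree_sub_C])
  calc #{c | P.eval c = v} ≤ (P - C v).natDegree := by
        refine card_le_degree_of_subset_roots fun c hc => ?_
        rw [mem_roots hne]
        simpa [sub_eq_zero] using (mem_filter.1 hc).2
    _ = P.natDegree := natDegree_sub_C

section AffineNorm

variable {R : Type*} [CommRing R] {ι : Type*} [Fintype ι] (p : ℕ) (x y : ι → R)

/-- `c ↦ ∑ i, (c * x i + y i) ^ (p + 1)` in characteristic `p`, expanded via
`(u + v) ^ p = u ^ p + v ^ p`. -/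
noncomputable def affineNormPoly : R[X] :=
  C (∑ i, x i ^ (p + 1)) * X ^ (p + 1) + C (∑ i, x i ^ p * y i) * X ^ p
    + C (∑ i, x i * y i ^ p) * X + C (∑ i, y i ^ (p + 1))

theorem eval_affineNormPoly [ExpChar R p] (c : R) :
    (affineNormPoly p x y).eval c = ∑ i, (c * x i + y i) ^ (p + 1) := by
  have hterm : ∀ i, (c * x i + y i) ^ (p + 1) = x i ^ (p + 1) * c ^ (p + 1)
      + x i ^ p * y i * c ^ p + x i * y i ^ p * c + y i ^ (p + 1) := fun i => by
    rw [pow_succ, add_pow_expChar, mul_pow]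
    ring
  simp only [affineNormPoly, hterm, sum_add_distrib, ← sum_mul, eval_add, eval_mul, eval_C,
    eval_pow, eval_X]

theorem natDegree_affineNormPoly_le : (affineNormPoly p x y).natDegree ≤ p + 1 := by
  unfold affineNormPoly
  compute_degree

theorem coeff_affineNormPoly_one {p : ℕ} (hp : 1 < p) :
    (affineNormPoly p x y).coeff 1 = ∑ i, x i * y i ^ p := by
  simp only [affineNormPoly, coeff_add, coeff_C_mul_X_pow, coeff_C_mul_X, coeff_C]
  rw [if_neg (by omega), if_neg hp.ne, if_pos trivial, if_neg one_ne_zero]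
  ring

theorem sum_pow_succ_pow_eq_self [ExpChar R p] (hfrob : ∀ a : R, a ^ (p ^ 2) = a) :
    (∑ i, x i ^ (p + 1)) ^ p = ∑ i, x i ^ (p + 1) := by
  rw [sum_pow_char]
  refine sum_congr rfl fun i _ => ?_
  rw [← pow_mul, add_one_mul, pow_add, ← sq, hfrob, ← pow_succ']

end AffineNorm

/-- If `⟨x,y⟩ ≠ 0` then `c ↦ ‖c • x + y‖` takes every value of the
prime subfield `F_p` (elements `k` with `k^p = k`) as `c` ranges over `F_{p^2}`. -/
theorem norm_affine_surjective (p n : ℕ) (hp : p.Prime) (F : Type*) [Field F] [Fintype F]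
    (hF : Fintype.card F = p ^ 2)
    (x y : Fin n → F)
    (hxy : ∑ i, x i * (y i) ^ p ≠ 0) :
    ∀ k : F, k ^ p = k → ∃ c : F, ∑ i, (c * x i + y i) ^ (p + 1) = k := by
  classical
  have := Fact.mk hp
  have : CharP F p := charP_of_card_eq_prime_pow hF
  have hp1 := hp.one_lt
  set P := affineNormPoly p x y
  set T : Finset F := {z | z ^ p = z}
  have hmaps : ∀ c ∈ univ, P.eval c ∈ T := fun c _ => mem_filter.2 ⟨mem_univ _, by
    rw [eval_affineNormPoly]
    exact sum_pow_succ_pow_eq_self p _ fun a => hF ▸ FiniteField.pow_card a⟩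
  have hP_pos : 0 < P.natDegree :=
    le_natDegree_of_ne_zero (by rwa [coeff_affineNormPoly_one x y hp1])
  have hfib : ∀ v ∈ T, #{c ∈ univ | P.eval c = v} ≤ p + 1 := fun v _ =>
    (card_filter_eval_eq_le P hP_pos v).trans (natDegree_affineNormPoly_le ..)
  have hcount : (p + 1) * (#T - 1) < #(univ : Finset F) := by
    rw [card_univ, hF]
    calc (p + 1) * (#T - 1) ≤ (p + 1) * (p - 1) := by gcongr; exact card_filter_pow_eq_self_le hp1
      _ < p ^ 2 := by
        rw [← Nat.sq_sub_sq, one_pow]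
        exact Nat.sub_lt (by positivity) one_pos
  intro k hk
  obtain ⟨c, -, hc⟩ := exists_eq_of_card_fiber_le hmaps (p + 1) hfib hcount
    (mem_filter.2 ⟨mem_univ _, hk⟩)
  exact ⟨c, by rwa [← eval_affineNormPoly]⟩
end

section
/- Let p be a prime, D a subspace of F_{p^2}^n, and M a basis of D ∩ D^{⊥h}, where ⊥h denotes the Hermitian dual. Then there exists a set B of vectors in D that is orthonormal with respect to the Hermitian inner product (⟨b,b'⟩ = 0 for distinct b, b' ∈ B and ‖b‖ = 1 for all b ∈ B) such that M ∪ B is a basis for D. -/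
/-!
Since `#F = p²`, the Frobenius `x ↦ x ^ p` is an involution of `F`, so `⟨x, y⟩ = ∑ xᵢ yᵢ ^ p`
is a Hermitian form. If `D` is not contained in its Hermitian dual, polarization along a scalar
not fixed by Frobenius yields `y ∈ D` with `⟨y, y⟩ ≠ 0`. That value is Frobenius-fixed, hence of
the form `c ^ (p + 1)`: in the cyclic group `Fˣ` the `(p + 1)`-th powers are exactly the kernel of
`x ↦ x ^ (p - 1)`. Rescaling `y` gives a unit vector `b ∈ D`, and `D = F b ⊕ D'` with
`D' = D ∩ b^⊥`. Since `D'` has the same radical `D ∩ D^⊥` as `D`, induction on the dimension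
splits off unit vectors until `D` is totally isotropic, i.e. equal to its radical, spanned by `M`.
-/

/-- The Hermitian dual of a subspace of `F_{p^2}^n`, with respect to
`⟨x,y⟩ = ∑ i, x i * (y i)^p`. -/
def hermDual (p : ℕ) {n : ℕ} {F : Type*} [Field F] (D : Submodule F (Fin n → F)) :
    Submodule F (Fin n → F) where
  carrier := {v | ∀ d ∈ D, ∑ i, v i * (d i) ^ p = 0}
  zero_mem' := by intro d _; simp
  add_mem' := by
    intro a b ha hb d hd
    simp only [Pi.add_apply, add_mul, Finset.sum_add_distrib, ha d hd, hb d hd, add_zero]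
  smul_mem' := by
    intro c a ha d hd
    simp only [Pi.smul_apply, smul_eq_mul, mul_assoc, ← Finset.mul_sum, ha d hd, mul_zero]

theorem IsCyclic.range_powMonoidHom_eq_ker {G : Type*} [CommGroup G] [IsCyclic G] [Finite G]
    {d e : ℕ} (h : d * e = Nat.card G) :
    (powMonoidHom d : G →* G).range = (powMonoidHom e).ker := by
  have hd : 0 < d := Nat.pos_of_mul_pos_right (h ▸ Nat.card_pos)
  refine Subgroup.eq_of_le_of_card_ge ?_ ?_
  · rintro _ ⟨x, rfl⟩
    simp [← pow_mul, h, pow_card_eq_one']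
  · rw [IsCyclic.card_powMonoidHom_range, IsCyclic.card_powMonoidHom_ker, ← h,
      Nat.gcd_mul_left_left, Nat.gcd_mul_right_left, Nat.mul_div_cancel_left _ hd]

namespace FiniteField

variable {F : Type*} [Field F] [Fintype F] {q : ℕ}

theorem pow_pow_eq_self (hF : Fintype.card F = q ^ 2) (a : F) : (a ^ q) ^ q = a := by
  rw [← pow_mul, ← sq, ← hF, FiniteField.pow_card]

theorem exists_pow_succ_eq_of_pow_eq (hF : Fintype.card F = q ^ 2) {a : F} (ha₀ : a ≠ 0)
    (ha : a ^ q = a) : ∃ c : F, c ^ (q + 1) = a := by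
  have hq : q ≠ 0 := by rintro rfl; simp at hF
  have hcard : (q + 1) * (q - 1) = Nat.card Fˣ := by
    rw [Nat.card_units, Nat.card_eq_fintype_card, hF, ← Nat.sq_sub_sq]
  have hker : Units.mk0 a ha₀ ∈ (powMonoidHom (q - 1) : Fˣ →* Fˣ).ker := by
    rw [MonoidHom.mem_ker, powMonoidHom_apply, ← mul_eq_right (b := Units.mk0 a ha₀),
      pow_sub_one_mul hq]
    exact Units.ext ha
  rw [← IsCyclic.range_powMonoidHom_eq_ker hcard] at hker
  obtain ⟨c, hc⟩ := hker
  exact ⟨c, by simpa [Units.ext_iff] using hc⟩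

theorem exists_pow_ne_self (hF : Fintype.card F = q ^ 2) (hq : 1 < q) : ∃ c : F, c ^ q ≠ c := by
  obtain ⟨g, hg⟩ := IsCyclic.exists_ofOrder_eq_natCard (α := Fˣ)
  refine ⟨g, fun hgq => ?_⟩
  have h1 : g ^ (q - 1) = 1 := by
    rw [← mul_eq_right (b := g), pow_sub_one_mul (by omega)]
    exact Units.ext hgq
  have := Nat.le_of_dvd (by omega) (hg ▸ orderOf_dvd_of_pow_eq_one h1)
  rw [Nat.card_units, Nat.card_eq_fintype_card, hF] at this
  have : q < q ^ 2 := lt_self_pow₀ hq one_lt_two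
  omega

end FiniteField

open Module Submodule

section HermForm

variable {F ι : Type*} [Field F] [Fintype ι]

def hermForm (p : ℕ) (x y : ι → F) : F := ∑ i, x i * y i ^ p

def HermOrthonormal (p : ℕ) (B : Set (ι → F)) : Prop :=
  B.Pairwise (fun b b' => hermForm p b b' = 0) ∧ ∀ b ∈ B, hermForm p b b = 1

variable {p : ℕ}

theorem hermForm_add_left (x x' y : ι → F) :
    hermForm p (x + x') y = hermForm p x y + hermForm p x' y := by
  simp [hermForm, add_mul, Finset.sum_add_distrib]

theorem hermForm_sub_left (x x' y : ι → F) :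
    hermForm p (x - x') y = hermForm p x y - hermForm p x' y := by
  simp [hermForm, sub_mul, Finset.sum_sub_distrib]

theorem hermForm_smul_left (c : F) (x y : ι → F) :
    hermForm p (c • x) y = c * hermForm p x y := by
  simp [hermForm, mul_assoc, Finset.mul_sum]

theorem hermForm_smul_right (c : F) (x y : ι → F) :
    hermForm p x (c • y) = c ^ p * hermForm p x y := by
  simp only [hermForm, Pi.smul_apply, smul_eq_mul, mul_pow, Finset.mul_sum]
  exact Finset.sum_congr rfl fun i _ => by ring

theorem hermForm_self (x : ι → F) : hermForm p x x = ∑ i, x i ^ (p + 1) :=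
  Finset.sum_congr rfl fun i _ => (pow_succ' (x i) p).symm

variable [CharP F p] [Fact p.Prime]

theorem hermForm_add_right (x y y' : ι → F) :
    hermForm p x (y + y') = hermForm p x y + hermForm p x y' := by
  simp [hermForm, add_pow_char, mul_add, Finset.sum_add_distrib]

theorem hermForm_swap [Fintype F] (hF : Fintype.card F = p ^ 2) (x y : ι → F) :
    hermForm p y x = hermForm p x y ^ p := by
  rw [hermForm, hermForm, sum_pow_char]
  refine Finset.sum_congr rfl fun i _ => ?_
  rw [mul_pow, FiniteField.pow_pow_eq_self hF, mul_comm]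

end HermForm

section HermDual

variable {F : Type*} [Field F] {p n : ℕ}

theorem mem_hermDual {D : Submodule F (Fin n → F)} {v : Fin n → F} :
    v ∈ hermDual p D ↔ ∀ d ∈ D, hermForm p v d = 0 :=
  Iff.rfl

theorem mem_hermDual_span_singleton {b v : Fin n → F} :
    v ∈ hermDual p (F ∙ b) ↔ hermForm p v b = 0 := by
  refine ⟨fun h => h b (mem_span_singleton_self b), fun h d hd => ?_⟩
  obtain ⟨c, rfl⟩ := mem_span_singleton.mp hd
  change hermForm p v (c • b) = 0
  rw [hermForm_smul_right, h, mul_zero]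

theorem span_singleton_sup_inf_hermDual {D : Submodule F (Fin n → F)} {b : Fin n → F}
    (hb : b ∈ D) (hbb : hermForm p b b ≠ 0) : (F ∙ b) ⊔ D ⊓ hermDual p (F ∙ b) = D := by
  refine le_antisymm (sup_le ((span_singleton_le_iff_mem b D).mpr hb) inf_le_left) fun d hd => ?_
  set c := hermForm p d b / hermForm p b b
  have hproj : d - c • b ∈ D ⊓ hermDual p (F ∙ b) := by
    refine ⟨D.sub_mem hd (D.smul_mem c hb), mem_hermDual_span_singleton.mpr ?_⟩
    rw [hermForm_sub_left, hermForm_smul_left, div_mul_cancel₀ _ hbb, sub_self]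
  exact mem_sup.mpr ⟨c • b, smul_mem _ c (mem_span_singleton_self b), _, hproj, add_sub_cancel _ _⟩

variable [CharP F p] [Fact p.Prime]

theorem hermDual_sup (A B : Submodule F (Fin n → F)) :
    hermDual p (A ⊔ B) = hermDual p A ⊓ hermDual p B := by
  ext v
  simp only [mem_inf, mem_hermDual]
  refine ⟨fun h => ⟨fun a ha => h a (mem_sup_left ha), fun b hb => h b (mem_sup_right hb)⟩, ?_⟩
  rintro ⟨hA, hB⟩ d hd
  obtain ⟨a, ha, b, hb, rfl⟩ := mem_sup.mp hd
  rw [hermForm_add_right, hA a ha, hB b hb, add_zero]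

theorem inf_hermDual_inf_hermDual_span_singleton {D : Submodule F (Fin n → F)} {b : Fin n → F}
    (hb : b ∈ D) (hbb : hermForm p b b ≠ 0) :
    D ⊓ hermDual p (F ∙ b) ⊓ hermDual p (D ⊓ hermDual p (F ∙ b)) = D ⊓ hermDual p D := by
  calc D ⊓ hermDual p (F ∙ b) ⊓ hermDual p (D ⊓ hermDual p (F ∙ b))
      _ = D ⊓ hermDual p ((F ∙ b) ⊔ D ⊓ hermDual p (F ∙ b)) := by rw [hermDual_sup, inf_assoc]
      _ = D ⊓ hermDual p D := by rw [span_singleton_sup_inf_hermDual hb hbb]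

end HermDual

section FiniteField

variable {F : Type*} [Field F] [Fintype F] {p n : ℕ} [CharP F p] [Fact p.Prime]

theorem le_hermDual_self_of_forall_hermForm_self_eq_zero (hF : Fintype.card F = p ^ 2)
    {D : Submodule F (Fin n → F)} (h : ∀ x ∈ D, hermForm p x x = 0) : D ≤ hermDual p D := by
  intro x hx d hd
  change hermForm p x d = 0
  set t := hermForm p x d
  have hpolar : ∀ c : F, c ^ p * t + c * t ^ p = 0 := by
    intro c
    have h0 := h _ (D.add_mem hx (D.smul_mem c hd))
    simp only [hermForm_add_left, hermForm_add_right, hermForm_smul_left, hermForm_smul_right,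
      h x hx, h d hd, hermForm_swap hF x d] at h0
    linear_combination h0
  obtain ⟨c, hc⟩ := FiniteField.exists_pow_ne_self hF (Fact.out : p.Prime).one_lt
  have ht : t ^ p = -t := by linear_combination hpolar 1
  have hct : (c ^ p - c) * t = 0 := by linear_combination hpolar c - c * ht
  exact (mul_eq_zero.mp hct).resolve_left (sub_ne_zero.mpr hc)

theorem exists_mem_hermForm_self_eq_one (hF : Fintype.card F = p ^ 2)
    {D : Submodule F (Fin n → F)} (hD : ¬ D ≤ hermDual p D) : ∃ b ∈ D, hermForm p b b = 1 := by
  obtain ⟨y, hy, hyy⟩ : ∃ y ∈ D, hermForm p y y ≠ 0 := by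
    by_contra! h
    exact hD (le_hermDual_self_of_forall_hermForm_self_eq_zero hF h)
  have hfix : (hermForm p y y)⁻¹ ^ p = (hermForm p y y)⁻¹ := by
    rw [inv_pow, ← hermForm_swap hF]
  obtain ⟨c, hc⟩ := FiniteField.exists_pow_succ_eq_of_pow_eq hF (inv_ne_zero hyy) hfix
  refine ⟨c • y, D.smul_mem c hy, ?_⟩
  rw [hermForm_smul_left, hermForm_smul_right, ← mul_assoc, ← pow_succ', hc, inv_mul_cancel₀ hyy]

theorem HermOrthonormal.insert (hF : Fintype.card F = p ^ 2) {B : Set (Fin n → F)}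
    (hB : HermOrthonormal p B) {b : Fin n → F} (hbb : hermForm p b b = 1)
    (hbB : ∀ w ∈ B, hermForm p w b = 0) : HermOrthonormal p (insert b B) := by
  refine ⟨hB.1.insert fun w hw _ => ⟨?_, hbB w hw⟩, Set.forall_mem_insert.mpr ⟨hbb, hB.2⟩⟩
  rw [hermForm_swap hF, hbB w hw, zero_pow (Fact.out : p.Prime).ne_zero]

theorem exists_hermOrthonormal_union_basis (hF : Fintype.card F = p ^ 2)
    (D : Submodule F (Fin n → F)) (M : Set (Fin n → F)) (hMli : LinearIndepOn F id M)
    (hMspan : span F M = D ⊓ hermDual p D) :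
    ∃ B : Finset (Fin n → F), (B : Set (Fin n → F)) ⊆ D ∧ HermOrthonormal p (B : Set (Fin n → F)) ∧
      LinearIndepOn F id (M ∪ B) ∧ span F (M ∪ B) = D := by
  classical
  induction hk : finrank F D using Nat.strong_induction_on generalizing D with
  | _ k ih =>
  by_cases hD : D ≤ hermDual p D
  · refine ⟨∅, by simp, by simp [HermOrthonormal], by simpa using hMli, ?_⟩
    simpa [hMspan] using hD
  obtain ⟨b, hb, hbb⟩ := exists_mem_hermForm_self_eq_one hF hD
  have hbb₀ : hermForm p b b ≠ 0 := hbb ▸ one_ne_zero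
  have hbD' : b ∉ D ⊓ hermDual p (F ∙ b) := fun h => hbb₀ (mem_hermDual_span_singleton.mp h.2)
  have hlt : finrank F ↥(D ⊓ hermDual p (F ∙ b)) < k :=
    hk ▸ finrank_lt_finrank_of_lt (SetLike.lt_iff_le_and_exists.mpr ⟨inf_le_left, b, hb, hbD'⟩)
  obtain ⟨B', hB'D', hB'orth, hB'li, hB'span⟩ := ih _ hlt _
    (hMspan.trans (inf_hermDual_inf_hermDual_span_singleton hb hbb₀).symm) rfl
  refine ⟨insert b B', ?_, ?_, ?_, ?_⟩
  · rw [Finset.coe_insert]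
    exact Set.insert_subset hb (hB'D'.trans inf_le_left)
  · rw [Finset.coe_insert]
    exact hB'orth.insert hF hbb fun w hw => mem_hermDual_span_singleton.mp (hB'D' hw).2
  · rw [Finset.coe_insert, Set.union_insert]
    exact hB'li.id_insert (hB'span ▸ hbD')
  · rw [Finset.coe_insert, Set.union_insert, span_insert, hB'span,
      span_singleton_sup_inf_hermDual hb hbb₀]

end FiniteField

/-- If `M` is a basis of `D ∩ D^{⊥h}`, there is a Hermitian-orthonormal
set `B ⊆ D` such that `M ∪ B` is a basis of `D`. -/
theorem exists_orthonormal_completion (p n : ℕ) (hp : p.Prime) (F : Type*) [Field F] [Fintype F] [DecidableEq F]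
    (hF : Fintype.card F = p ^ 2)
    (D : Submodule F (Fin n → F)) (M : Finset (Fin n → F))
    (hMli : LinearIndependent F (Subtype.val : ↥(M : Set (Fin n → F)) → (Fin n → F)))
    (hMspan : Submodule.span F (M : Set (Fin n → F)) = D ⊓ hermDual p D) :
    ∃ B : Finset (Fin n → F),
      (↑B : Set (Fin n → F)) ⊆ D ∧
      (∀ b ∈ B, ∀ b' ∈ B, b ≠ b' → ∑ i, b i * (b' i) ^ p = 0) ∧
      (∀ b ∈ B, ∑ i, (b i) ^ (p + 1) = 1) ∧
      LinearIndependent F (Subtype.val : ↥((M ∪ B : Finset (Fin n → F)) : Set (Fin n → F)) → (Fin n → F)) ∧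
      Submodule.span F ((M ∪ B : Finset (Fin n → F)) : Set (Fin n → F)) = D := by
  have : Fact p.Prime := ⟨hp⟩
  have : CharP F p := charP_of_card_eq_prime_pow hF
  obtain ⟨B, hBD, ⟨horth, hnorm⟩, hli, hspan⟩ :=
    exists_hermOrthonormal_union_basis hF D M hMli hMspan
  refine ⟨B, hBD, fun b hb b' hb' => horth hb hb', fun b hb => ?_, ?_, ?_⟩
  · rw [← hermForm_self, hnorm b hb]
  · rwa [Finset.coe_union]
  · rwa [Finset.coe_union]
end
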